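/- Let {A^{(j)}} be a projective matrix system over a Bratteli diagram Br, and let {ε_j} be positive numbers in (0, 1/2) satisfying ε_j · sqrt(#Br_j) · ((A^{(1)}···A^{(j)})_{v_0,w})^{-1} · ∏_{k=1}^j (2‖A^{(k)}‖ + 1) ≤ 4^{-j} for all w ∈ Br_j. If {B^{(j)}} is another projective matrix system over Br such that for some N, |A^{(j)}_{v,w} − B^{(j)}_{v,w}| ≤ ε_j A^{(j)}_{v,w} for all entries when j ≥ N, then the inverse limit of {A^{(j)}} is affinely homeomorphic to the inverse limit of {B^{(j)}}. -/

import Mathlib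

open scoped BigOperators

variable (V : ℕ → Type) [∀ n, Fintype (V n)] [∀ n, DecidableEq (V n)]
  [∀ n, Nonempty (V n)] [Subsingleton (V 0)]

/-- The product `A^{(1)} A^{(2)} ⋯ A^{(k)}` of the matrices of a projective matrix
system over the levels of a Bratteli diagram (with our indexing, `A j` is the matrix
over `V j × V (j+1)`). -/
def prodUpTo (A : ∀ j, Matrix (V j) (V (j + 1)) ℝ) : ∀ k, Matrix (V 0) (V k) ℝ
  | 0 => 1
  | k + 1 => prodUpTo A k * A k

/-- The inverse limit `lim_j A^{(j)}`: sequences of nonnegative vectors `ψ^j ∈ [0,∞)^{V j}`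
with `ψ^j = A^{(j+1)} ψ^{j+1}`, as a subset of the product space `∏_j (V j → ℝ)`. -/
def limSet (A : ∀ j, Matrix (V j) (V (j + 1)) ℝ) : Set (∀ j, V j → ℝ) :=
  {ψ | (∀ j v, 0 ≤ ψ j v) ∧ ∀ j, ψ j = (A j).mulVec (ψ (j + 1))}

/-- The Euclidean (`ℓ²`) norm of a vector. -/
noncomputable def eNorm {ι : Type} [Fintype ι] (x : ι → ℝ) : ℝ :=
  Real.sqrt (∑ i, (x i) ^ 2)

/-- The operator norm of a matrix for the Euclidean norms. -/
noncomputable def l2opNorm {ι κ : Type} [Fintype ι] [Fintype κ] (M : Matrix ι κ ℝ) : ℝ :=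
  sSup {c | ∃ x : κ → ℝ, eNorm x ≤ 1 ∧ c = eNorm (M.mulVec x)}

/-!
The homeomorphism is `ψ ↦ (lim_n B_j ⋯ B_{n-1} ψ_n)_j`, with inverse
`φ ↦ (lim_n A_j ⋯ A_{n-1} φ_n)_j`. Consecutive terms of the first sequence differ by
`B_j ⋯ B_{n-1} (B_n - A_n) ψ_{n+1}`. Beyond level `N` we have `|B_n - A_n| ≤ ε_n A_n` and
`|B_n| ≤ 2 A_n`, so products of the `B_k` grow at most like `G_n = ∏_{k<n} (2‖A_k‖ + 1)`,
while `(A_0 ⋯ A_{n-1})_{v_0 w} ψ_n(w) ≤ ψ_0(v_0)` bounds `ψ_{n+1}` entrywise. The tolerance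
condition turns this into increments of size `O(2^{-n} / G_j)`, with a constant depending
continuously on `ψ`: this gives convergence, continuity (by locally uniform convergence) and
affinity. The same works for `A` acting on the inverse limit of `B`, since `A_k ≤ 2 B_k` only
costs a factor `2^n`. Finally the tail at level `n` is `O(2^{-n} / G_n)`, which the growth
`G_n / G_j` of `A_j ⋯ A_{n-1}` cannot undo, so the two maps are mutually inverse.
-/

open Finset Filter Topology Matrix
open scoped Matrix.Norms.L2Operator

section EuclideanNorm

variable {ι κ : Type} [Fintype ι] [Fintype κ]

lemma eNorm_eq_norm_toLp (x : ι → ℝ) : eNorm x = ‖WithLp.toLp 2 x‖ := by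
  simp [EuclideanSpace.norm_eq, eNorm]

lemma eNorm_sub_eq_dist (x y : ι → ℝ) :
    eNorm (x - y) = dist (WithLp.toLp 2 x) (WithLp.toLp 2 y) := by
  rw [dist_eq_norm, ← WithLp.toLp_sub, eNorm_eq_norm_toLp]

lemma eNorm_sub_comm (x y : ι → ℝ) : eNorm (x - y) = eNorm (y - x) := by
  rw [eNorm_sub_eq_dist, eNorm_sub_eq_dist, dist_comm]

lemma eNorm_nonneg (x : ι → ℝ) : 0 ≤ eNorm x := Real.sqrt_nonneg _

lemma abs_apply_le_eNorm (x : ι → ℝ) (i : ι) : |x i| ≤ eNorm x := by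
  rw [eNorm_eq_norm_toLp]
  exact PiLp.norm_apply_le (WithLp.toLp 2 x) i

lemma dist_le_eNorm_sub (x y : ι → ℝ) : dist x y ≤ eNorm (x - y) :=
  (dist_pi_le_iff (eNorm_nonneg _)).2 fun i => abs_apply_le_eNorm (x - y) i

lemma eNorm_le_of_abs_le {x y : ι → ℝ} (h : ∀ i, |x i| ≤ y i) : eNorm x ≤ eNorm y :=
  Real.sqrt_le_sqrt <| sum_le_sum fun i _ => sq_le_sq' (abs_le.1 (h i)).1 (abs_le.1 (h i)).2

lemma eNorm_le_sqrt_card_mul {x : ι → ℝ} {c : ℝ} (hc : 0 ≤ c) (h : ∀ i, |x i| ≤ c) :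
    eNorm x ≤ √(Fintype.card ι) * c := by
  calc eNorm x ≤ eNorm (fun _ : ι => c) := eNorm_le_of_abs_le h
    _ = √(Fintype.card ι) * c := by
      simp [eNorm, Real.sqrt_mul (Nat.cast_nonneg _), Real.sqrt_sq hc]

lemma eNorm_smul (a : ℝ) (x : ι → ℝ) : eNorm (a • x) = |a| * eNorm x := by
  rw [eNorm_eq_norm_toLp, eNorm_eq_norm_toLp, WithLp.toLp_smul, norm_smul, Real.norm_eq_abs]

lemma mul_eNorm_le_of_mul_le [Nonempty ι] {p x : ι → ℝ} {t a c : ℝ}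
    (hp : ∀ i, 0 < p i) (ht : 0 ≤ t) (hpt : ∀ i, t * √(Fintype.card ι) * (p i)⁻¹ ≤ a)
    (hx0 : ∀ i, 0 ≤ x i) (hx : ∀ i, p i * x i ≤ c) : t * eNorm x ≤ a * c := by
  have hcard : 0 < √(Fintype.card ι) := Real.sqrt_pos.2 (Nat.cast_pos.2 Fintype.card_pos)
  have hpoint : ∀ i, |((t * √(Fintype.card ι)) • x) i| ≤ a * c := fun i => by
    rw [Pi.smul_apply, smul_eq_mul, abs_of_nonneg (mul_nonneg (mul_nonneg ht hcard.le) (hx0 i))]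
    calc t * √(Fintype.card ι) * x i
        = (t * √(Fintype.card ι) * (p i)⁻¹) * (p i * x i) := by field_simp [(hp i).ne']
      _ ≤ a * c := mul_le_mul (hpt i) (hx i) (mul_nonneg (hp i).le (hx0 i))
          ((mul_nonneg (mul_nonneg ht hcard.le) (inv_nonneg.2 (hp i).le)).trans (hpt i))
  have := eNorm_le_sqrt_card_mul ((abs_nonneg _).trans (hpoint (Classical.arbitrary ι))) hpoint
  rw [eNorm_smul, abs_of_nonneg (mul_nonneg ht hcard.le), mul_right_comm] at this
  exact le_of_mul_le_mul_right (by linarith) hcard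

lemma exists_tendsto_of_eNorm_sub_le {F : ℕ → ι → ℝ} {C : ℝ} {m : ℕ} (hC : 0 ≤ C)
    (hF : ∀ n, m ≤ n → eNorm (F (n + 1) - F n) ≤ C / 2 / 2 ^ n) :
    ∃ L, Tendsto F atTop (𝓝 L) ∧ ∀ n, m ≤ n → eNorm (L - F n) ≤ C / 2 ^ n := by
  -- freezing `F` before `m` puts us in the setting of Mathlib's bounds, stated for all `n`
  set g : ℕ → EuclideanSpace ℝ ι := fun n => WithLp.toLp 2 (F (max m n))
  have hg : ∀ n, dist (g n) (g (n + 1)) ≤ C / 2 / 2 ^ n := by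
    intro n
    rcases lt_or_ge n m with hn | hn
    · simp [g, max_eq_left hn.le, max_eq_left (Nat.succ_le_of_lt hn)]
      positivity
    · simpa [g, max_eq_right hn, max_eq_right (hn.trans n.le_succ),
        dist_comm (WithLp.toLp 2 (F n)), ← eNorm_sub_eq_dist] using hF n hn
  obtain ⟨a, ha⟩ := cauchySeq_tendsto_of_complete (cauchySeq_of_le_geometric_two hg)
  have hgF : ∀ n, m ≤ n → g n = WithLp.toLp 2 (F n) := fun n hn => by
    simp [g, max_eq_right hn]
  refine ⟨WithLp.ofLp a, ?_, fun n hn => ?_⟩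
  · refine ((PiLp.continuous_ofLp 2 _).tendsto a |>.comp ha).congr' ?_
    filter_upwards [eventually_ge_atTop m] with n hn
    simp [hgF n hn]
  · rw [eNorm_sub_eq_dist, WithLp.toLp_ofLp, dist_comm, ← hgF n hn]
    exact dist_le_of_le_geometric_two_of_tendsto hg ha n

lemma tendsto_of_eNorm_sub_le {F : ℕ → ι → ℝ} {L : ι → ℝ} {K : ℝ} {m : ℕ}
    (h : ∀ n, m ≤ n → eNorm (L - F n) ≤ K / 2 ^ n) : Tendsto F atTop (𝓝 L) := by
  rw [tendsto_iff_dist_tendsto_zero]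
  refine squeeze_zero' (g := fun n => K / 2 ^ n) (Eventually.of_forall fun _ => dist_nonneg) ?_
    (tendsto_const_nhds.div_atTop (tendsto_pow_atTop_atTop_of_one_lt one_lt_two))
  filter_upwards [eventually_ge_atTop m] with n hn
  rw [dist_comm]
  exact (dist_le_eNorm_sub _ _).trans (h n hn)

lemma l2opNorm_bddAbove (M : Matrix ι κ ℝ) :
    BddAbove {c | ∃ x : κ → ℝ, eNorm x ≤ 1 ∧ c = eNorm (M *ᵥ x)} := by
  classical
  refine ⟨‖M‖, ?_⟩
  rintro c ⟨x, hx, rfl⟩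
  rw [eNorm_eq_norm_toLp] at hx ⊢
  calc _ ≤ ‖M‖ * ‖WithLp.toLp 2 x‖ := M.l2_opNorm_mulVec _
    _ ≤ ‖M‖ := mul_le_of_le_one_right (norm_nonneg _) hx

lemma l2opNorm_nonneg (M : Matrix ι κ ℝ) : 0 ≤ l2opNorm M :=
  le_csSup_of_le (l2opNorm_bddAbove M) ⟨0, by simp [eNorm], rfl⟩ (eNorm_nonneg _)

lemma eNorm_mulVec_le (M : Matrix ι κ ℝ) (x : κ → ℝ) :
    eNorm (M *ᵥ x) ≤ l2opNorm M * eNorm x := by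
  rcases (eNorm_nonneg x).eq_or_lt with hx | hx
  · have hx0 : x = 0 := funext fun i => abs_nonpos_iff.1 (hx ▸ abs_apply_le_eNorm x i)
    simp [hx0, eNorm]
  · have hunit : eNorm ((eNorm x)⁻¹ • x) = 1 := by
      rw [eNorm_smul, abs_of_pos (inv_pos.2 hx), inv_mul_cancel₀ hx.ne']
    have := le_csSup (l2opNorm_bddAbove M) ⟨_, hunit.le, rfl⟩
    rwa [Matrix.mulVec_smul, eNorm_smul, abs_of_pos (inv_pos.2 hx), inv_mul_le_iff₀ hx,
      mul_comm] at this

lemma eNorm_mulVec_le_of_abs_le {M M' : Matrix ι κ ℝ} {t : ℝ} (ht : 0 ≤ t)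
    (h : ∀ i j, |M i j| ≤ t * M' i j) (x : κ → ℝ) :
    eNorm (M *ᵥ x) ≤ t * (l2opNorm M' * eNorm x) := by
  have habs : ∀ i, |(M *ᵥ x) i| ≤ (t • M' *ᵥ fun j => |x j|) i := fun i => by
    simp only [Matrix.mulVec, dotProduct, Pi.smul_apply, smul_eq_mul, mul_sum]
    refine (abs_sum_le_sum_abs _ _).trans (sum_le_sum fun j _ => ?_)
    rw [abs_mul, ← mul_assoc]
    exact mul_le_mul_of_nonneg_right (h i j) (abs_nonneg _)
  calc eNorm (M *ᵥ x) ≤ eNorm (t • M' *ᵥ fun j => |x j|) := eNorm_le_of_abs_le habs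
    _ = t * eNorm (M' *ᵥ fun j => |x j|) := by rw [eNorm_smul, abs_of_nonneg ht]
    _ ≤ t * (l2opNorm M' * eNorm x) := by
      grw [eNorm_mulVec_le]
      simp [eNorm, sq_abs]

lemma abs_le_two_mul_of_abs_sub_le {a b e : ℝ} (ha : 0 ≤ a) (he : e ≤ 1)
    (h : |a - b| ≤ e * a) : |b| ≤ 2 * a := by
  have := abs_sub_abs_le_abs_sub b a
  rw [abs_sub_comm, abs_of_nonneg ha] at this
  nlinarith

lemma le_two_mul_of_abs_sub_le {a b e : ℝ} (ha : 0 ≤ a) (he : e ≤ 1 / 2)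
    (h : |a - b| ≤ e * a) : a ≤ 2 * b := by
  nlinarith [le_abs_self (a - b)]

lemma eNorm_mulVec_le_of_abs_sub_le {M M' : Matrix ι κ ℝ} {e : ℝ} (hM : ∀ i j, 0 ≤ M i j)
    (he : e ≤ 1) (h : ∀ i j, |M i j - M' i j| ≤ e * M i j) (x : κ → ℝ) :
    eNorm (M' *ᵥ x) ≤ (2 * l2opNorm M + 1) * eNorm x :=
  (eNorm_mulVec_le_of_abs_le zero_le_two
    (fun i j => abs_le_two_mul_of_abs_sub_le (hM i j) he (h i j)) x).trans
    (by nlinarith [eNorm_nonneg x, l2opNorm_nonneg M])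

end EuclideanNorm

section SegmentProducts

variable {V : ℕ → Type} [∀ n, Fintype (V n)] [∀ n, DecidableEq (V n)]

/-- `segProd C j n = C j * C (j + 1) * ⋯ * C (n - 1)` for `j ≤ n`; it is `0` for `n < j`. -/
def segProd (C : ∀ j, Matrix (V j) (V (j + 1)) ℝ) (j : ℕ) : ∀ n, Matrix (V j) (V n) ℝ
  | 0 => if h : j = 0 then h ▸ 1 else 0
  | n + 1 => if h : j = n + 1 then h ▸ 1 else segProd C j n * C n

variable (C : ∀ j, Matrix (V j) (V (j + 1)) ℝ)

@[simp]
lemma segProd_self (j : ℕ) : segProd C j j = 1 := by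
  cases j <;> simp [segProd]

lemma segProd_succ {j n : ℕ} (h : j ≤ n) : segProd C j (n + 1) = segProd C j n * C n := by
  rw [segProd, dif_neg (by omega)]

lemma segProd_mul_segProd {j m n : ℕ} (hjm : j ≤ m) (hmn : m ≤ n) :
    segProd C j m * segProd C m n = segProd C j n := by
  induction n, hmn using Nat.le_induction with
  | base => rw [segProd_self, Matrix.mul_one]
  | succ n hmn ih =>
    rw [segProd_succ C hmn, segProd_succ C (hjm.trans hmn), ← ih, Matrix.mul_assoc]

lemma segProd_eq_mul {j n : ℕ} (h : j < n) : segProd C j n = C j * segProd C (j + 1) n := by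
  rw [← segProd_mul_segProd C j.le_succ h, segProd_succ C le_rfl, segProd_self, Matrix.one_mul]

lemma prodUpTo_eq_segProd (n : ℕ) : prodUpTo V C n = segProd C 0 n := by
  induction n with
  | zero => rfl
  | succ n ih => rw [prodUpTo, segProd_succ C n.zero_le, ih]

lemma segProd_nonneg (hC : ∀ k v w, 0 ≤ C k v w) (j n : ℕ) (v : V j) (w : V n) :
    0 ≤ segProd C j n v w := by
  induction n with
  | zero =>
    rw [segProd]
    split_ifs with h
    · subst h
      exact Matrix.zero_le_one_elem v w
    · rfl
  | succ n ih =>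
    rw [segProd]
    split_ifs with h
    · subst h
      exact Matrix.zero_le_one_elem v w
    · exact sum_nonneg fun u _ => mul_nonneg (ih u) (hC n u w)

lemma eNorm_segProd_mulVec_le {β : ℕ → ℝ} (hβ : ∀ k, 0 ≤ β k)
    (hC : ∀ k x, eNorm (C k *ᵥ x) ≤ β k * eNorm x) {j n : ℕ} (h : j ≤ n)
    (x : V n → ℝ) :
    eNorm (segProd C j n *ᵥ x) ≤ (∏ k ∈ Ico j n, β k) * eNorm x := by
  induction n, h using Nat.le_induction with
  | base => simp
  | succ n hjn ih =>
    rw [segProd_succ C hjn, ← Matrix.mulVec_mulVec, prod_Ico_succ_top hjn, mul_assoc]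
    exact (ih _).trans (mul_le_mul_of_nonneg_left (hC n x) (prod_nonneg fun k _ => hβ k))

lemma segProd_le_pow_mul {D : ∀ j, Matrix (V j) (V (j + 1)) ℝ} {t : ℝ} {j : ℕ}
    (hC : ∀ k v w, 0 ≤ C k v w) (hCD : ∀ k, j ≤ k → ∀ v w, C k v w ≤ t * D k v w)
    {n : ℕ} (h : j ≤ n) (v : V j) (w : V n) :
    segProd C j n v w ≤ t ^ (n - j) * segProd D j n v w := by
  induction n, h using Nat.le_induction with
  | base => simp
  | succ n hjn ih =>
    rw [segProd_succ C hjn, segProd_succ D hjn, Matrix.mul_apply, Matrix.mul_apply,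
      Nat.sub_add_comm hjn, pow_succ, mul_sum]
    refine sum_le_sum fun u _ => ?_
    calc segProd C j n v u * C n u w ≤ (t ^ (n - j) * segProd D j n v u) * (t * D n u w) :=
          mul_le_mul (ih u) (hCD n hjn u w) (hC n u w)
            ((segProd_nonneg C hC j n v u).trans (ih u))
      _ = _ := by ring

variable {C}

lemma mulVec_segProd_of_mem_limSet {χ : ∀ j, V j → ℝ} (hχ : χ ∈ limSet V C) {j n : ℕ}
    (h : j ≤ n) : segProd C j n *ᵥ χ n = χ j := by
  induction n, h using Nat.le_induction with
  | base => simp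
  | succ n hjn ih => rw [segProd_succ C hjn, ← Matrix.mulVec_mulVec, ← hχ.2 n, ih]

lemma segProd_apply_mul_le_of_mem_limSet (hC : ∀ k v w, 0 ≤ C k v w) {χ : ∀ j, V j → ℝ}
    (hχ : χ ∈ limSet V C) {j n : ℕ} (h : j ≤ n) (v : V j) (w : V n) :
    segProd C j n v w * χ n w ≤ χ j v := by
  rw [← mulVec_segProd_of_mem_limSet hχ h]
  exact single_le_sum (fun u _ => mul_nonneg (segProd_nonneg C hC j n v u) (hχ.1 n u))
    (mem_univ w)

end SegmentProducts

section LimitMap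

variable {V : ℕ → Type} [∀ n, Fintype (V n)] [∀ n, DecidableEq (V n)]

noncomputable def limitMap (C : ∀ j, Matrix (V j) (V (j + 1)) ℝ) (χ : ∀ j, V j → ℝ) :
    ∀ j, V j → ℝ :=
  fun j => limUnder atTop fun n => segProd C j n *ᵥ χ n

variable {C D : ∀ j, Matrix (V j) (V (j + 1)) ℝ} {χ : ∀ j, V j → ℝ} {N : ℕ}

def HasGeometricTail (C : ∀ j, Matrix (V j) (V (j + 1)) ℝ) (χ : ∀ j, V j → ℝ) (N : ℕ)
    (K : ℕ → ℝ) : Prop :=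
  ∀ j n, j ≤ n → N ≤ n → eNorm (limitMap C χ j - segProd C j n *ᵥ χ n) ≤ K j / 2 ^ n

lemma HasGeometricTail.tendsto {K : ℕ → ℝ} (h : HasGeometricTail C χ N K) (j : ℕ) :
    Tendsto (fun n => segProd C j n *ᵥ χ n) atTop (𝓝 (limitMap C χ j)) :=
  tendsto_of_eNorm_sub_le (m := max j N) fun n hn =>
    h j n (le_of_max_le_left hn) (le_of_max_le_right hn)

lemma HasGeometricTail.limitMap_mem_limSet {K : ℕ → ℝ} (h : HasGeometricTail C χ N K)
    (hC : ∀ k v w, 0 ≤ C k v w) (hχ : ∀ n v, 0 ≤ χ n v) :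
    limitMap C χ ∈ limSet V C := by
  refine ⟨fun j v => ge_of_tendsto' ((continuous_apply v).tendsto _ |>.comp (h.tendsto j))
    fun n => sum_nonneg fun w _ => mul_nonneg (segProd_nonneg C hC j n v w) (hχ n w),
    fun j => tendsto_nhds_unique (h.tendsto j) ?_⟩
  refine ((Continuous.matrix_mulVec continuous_const continuous_id).tendsto _
    |>.comp (h.tendsto (j + 1))).congr' ?_
  filter_upwards [eventually_gt_atTop j] with n hn
  simp [Matrix.mulVec_mulVec, ← segProd_eq_mul C hn]

lemma HasGeometricTail.limitMap_smul_add_smul {ψ : ∀ j, V j → ℝ} {K K' : ℕ → ℝ}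
    (hχ : HasGeometricTail C χ N K) (hψ : HasGeometricTail C ψ N K') (a b : ℝ) :
    limitMap C (a • χ + b • ψ) = a • limitMap C χ + b • limitMap C ψ := by
  funext j
  refine Tendsto.limUnder_eq ?_
  simpa [Matrix.mulVec_add, Matrix.mulVec_smul] using
    ((hχ.tendsto j).const_smul a).add ((hψ.tendsto j).const_smul b)

lemma continuousOn_limitMap {S : Set (∀ j, V j → ℝ)} {s : (∀ j, V j → ℝ) → ℝ}
    (hs : Continuous s) {K : ℕ → ℝ} (hK : ∀ j, 0 ≤ K j)
    (h : ∀ χ ∈ S, HasGeometricTail C χ N fun j => s χ * K j) :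
    ContinuousOn (limitMap C) S := by
  refine continuousOn_pi.2 fun j => ?_
  refine TendstoLocallyUniformlyOn.continuousOn (F := fun n χ => segProd C j n *ᵥ χ n)
    (p := atTop) ?_ (Frequently.of_forall fun n => by fun_prop)
  refine Metric.tendstoLocallyUniformlyOn_iff.2 fun δ hδ χ₀ _ => ?_
  refine ⟨S ∩ {χ | s χ < s χ₀ + 1}, inter_mem_nhdsWithin S
    ((hs.tendsto χ₀).eventually (gt_mem_nhds (lt_add_one _))), ?_⟩
  have hlim : Tendsto (fun n : ℕ => (s χ₀ + 1) * K j / 2 ^ n) atTop (𝓝 0) :=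
    tendsto_const_nhds.div_atTop (tendsto_pow_atTop_atTop_of_one_lt one_lt_two)
  filter_upwards [hlim.eventually_lt_const hδ, eventually_ge_atTop (max j N)]
    with n hn hjn χ ⟨hχS, hχs⟩
  calc dist (limitMap C χ j) (segProd C j n *ᵥ χ n)
      ≤ s χ * K j / 2 ^ n := (dist_le_eNorm_sub _ _).trans
        (h χ hχS j n (le_of_max_le_left hjn) (le_of_max_le_right hjn))
    _ ≤ (s χ₀ + 1) * K j / 2 ^ n := by gcongr; exacts [hK j, hχs.le]
    _ < δ := hn

lemma HasGeometricTail.limitMap_limitMap {g : ℕ → ℝ} (hg : ∀ n, 0 < g n) {M : ℝ}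
    (hM : 0 ≤ M)
    (hD : ∀ j n, j ≤ n → ∀ x, eNorm (segProd D j n *ᵥ x) ≤ M * (g n / g j) * eNorm x)
    (hχ : χ ∈ limSet V D) {c M' : ℝ} (h : HasGeometricTail C χ N fun j => c * (M' / g j)) :
    limitMap D (limitMap C χ) = χ := by
  funext j
  refine Tendsto.limUnder_eq <| tendsto_of_eNorm_sub_le (m := max j N)
    (K := M * (c * (M' / g j))) fun n hn => ?_
  have hjn := le_of_max_le_left hn
  have htail := h n n le_rfl (le_of_max_le_right hn)
  rw [segProd_self, Matrix.one_mulVec] at htail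
  calc eNorm (χ j - segProd D j n *ᵥ limitMap C χ n)
      = eNorm (segProd D j n *ᵥ (χ n - limitMap C χ n)) := by
        rw [Matrix.mulVec_sub, mulVec_segProd_of_mem_limSet hχ hjn]
    _ ≤ M * (g n / g j) * eNorm (limitMap C χ n - χ n) := by
        rw [eNorm_sub_comm (limitMap C χ n)]; exact hD j n hjn _
    _ ≤ M * (g n / g j) * (c * (M' / g n) / 2 ^ n) := by
        have := hg j; have := hg n; gcongr
    _ = M * (c * (M' / g j)) / 2 ^ n := by
        have := (hg n).ne'; field_simp

lemma exists_homeomorph_limSet {g : ℕ → ℝ} (hg : ∀ n, 0 < g n) (hC : ∀ k v w, 0 ≤ C k v w)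
    (hD : ∀ k v w, 0 ≤ D k v w) {MC MD : ℝ} (hMC0 : 0 ≤ MC) (hMD0 : 0 ≤ MD)
    (hMC : ∀ j n, j ≤ n → ∀ x, eNorm (segProd C j n *ᵥ x) ≤ MC * (g n / g j) * eNorm x)
    (hMD : ∀ j n, j ≤ n → ∀ x, eNorm (segProd D j n *ᵥ x) ≤ MD * (g n / g j) * eNorm x)
    {s s' : (∀ j, V j → ℝ) → ℝ} (hs : Continuous s) (hs' : Continuous s')
    (hCD : ∀ χ ∈ limSet V D, HasGeometricTail C χ N fun j => s χ * (MC / g j))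
    (hDC : ∀ χ ∈ limSet V C, HasGeometricTail D χ N fun j => s' χ * (MD / g j)) :
    ∃ Φ : ↥(limSet V D) ≃ₜ ↥(limSet V C), ∀ χ, (Φ χ : ∀ j, V j → ℝ) = limitMap C χ := by
  let e : PartialHomeomorph (∀ j, V j → ℝ) (∀ j, V j → ℝ) :=
    { toFun := limitMap C
      invFun := limitMap D
      source := limSet V D
      target := limSet V C
      map_source' := fun χ hχ => (hCD χ hχ).limitMap_mem_limSet hC hχ.1
      map_target' := fun χ hχ => (hDC χ hχ).limitMap_mem_limSet hD hχ.1
      left_inv' := fun χ hχ => (hCD χ hχ).limitMap_limitMap hg hMD0 hMD hχ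
      right_inv' := fun χ hχ => (hDC χ hχ).limitMap_limitMap hg hMC0 hMC hχ
      continuousOn_toFun := continuousOn_limitMap hs (fun j => div_nonneg hMC0 (hg j).le) hCD
      continuousOn_invFun := continuousOn_limitMap hs' (fun j => div_nonneg hMD0 (hg j).le) hDC }
  exact ⟨e.toHomeomorphSourceTarget, fun _ => rfl⟩

end LimitMap

section Growth

variable {V : ℕ → Type} [∀ n, Fintype (V n)] (A : ∀ j, Matrix (V j) (V (j + 1)) ℝ)

noncomputable def growthFactor (n : ℕ) : ℝ := ∏ k ∈ range n, (2 * l2opNorm (A k) + 1)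

lemma one_le_two_mul_l2opNorm_add_one (k : ℕ) : 1 ≤ 2 * l2opNorm (A k) + 1 := by
  linarith [l2opNorm_nonneg (A k)]

lemma growthFactor_pos (n : ℕ) : 0 < growthFactor A n :=
  prod_pos fun k _ => zero_lt_one.trans_le (one_le_two_mul_l2opNorm_add_one A k)

lemma prod_Ico_eq_growthFactor_div {j n : ℕ} (h : j ≤ n) :
    ∏ k ∈ Ico j n, (2 * l2opNorm (A k) + 1) = growthFactor A n / growthFactor A j := by
  rw [eq_div_iff (growthFactor_pos A j).ne', mul_comm, growthFactor, growthFactor,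
    prod_range_mul_prod_Ico _ h]

lemma exists_eNorm_segProd_mulVec_le [∀ n, DecidableEq (V n)]
    {C : ∀ j, Matrix (V j) (V (j + 1)) ℝ} {N : ℕ}
    (hC : ∀ k, N ≤ k → ∀ x, eNorm (C k *ᵥ x) ≤ (2 * l2opNorm (A k) + 1) * eNorm x) :
    ∃ M, 0 ≤ M ∧ ∀ j n, j ≤ n → ∀ x,
      eNorm (segProd C j n *ᵥ x) ≤ M * (growthFactor A n / growthFactor A j) * eNorm x := by
  -- below level `N`, the factors `‖C k‖ + 1` go into the constant
  set c : ℕ → ℝ := fun k => if k < N then l2opNorm (C k) + 1 else 1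
  have hc : ∀ k, 1 ≤ c k := fun k => by
    by_cases hk : k < N <;> simp [c, hk, l2opNorm_nonneg]
  refine ⟨∏ k ∈ range N, c k, prod_nonneg fun k _ => zero_le_one.trans (hc k),
    fun j n hjn x => ?_⟩
  have hstep : ∀ k x, eNorm (C k *ᵥ x) ≤ (c k * (2 * l2opNorm (A k) + 1)) * eNorm x := by
    intro k x
    by_cases hk : k < N
    · calc eNorm (C k *ᵥ x) ≤ l2opNorm (C k) * eNorm x := eNorm_mulVec_le _ _
        _ ≤ c k * (2 * l2opNorm (A k) + 1) * eNorm x := by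
          have := one_le_two_mul_l2opNorm_add_one A k
          have := eNorm_nonneg x
          simp only [c, if_pos hk]
          gcongr
          nlinarith [l2opNorm_nonneg (C k)]
    · simpa [c, hk] using hC k (not_lt.1 hk) x
  have hprod : ∏ k ∈ Ico j n, c k ≤ ∏ k ∈ range N, c k := by
    rw [← prod_filter_of_ne (p := (· < N)) fun k _ hk => by by_contra h; simp [c, h] at hk]
    exact prod_le_prod_of_subset_of_one_le (fun k hk => by simp at hk ⊢; omega)
      (fun k _ => zero_le_one.trans (hc k)) fun k _ _ => hc k
  calc eNorm (segProd C j n *ᵥ x)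
      ≤ (∏ k ∈ Ico j n, c k * (2 * l2opNorm (A k) + 1)) * eNorm x :=
        eNorm_segProd_mulVec_le C (fun k => by
          nlinarith [hc k, one_le_two_mul_l2opNorm_add_one A k]) hstep hjn x
    _ ≤ _ := by
      rw [prod_mul_distrib, prod_Ico_eq_growthFactor_div A hjn]
      have := growthFactor_pos A n; have := growthFactor_pos A j; have := eNorm_nonneg x
      gcongr

end Growth

section Perturbation

variable {V : ℕ → Type} [∀ n, Fintype (V n)] [∀ n, DecidableEq (V n)] [∀ n, Nonempty (V n)]
  {A C D : ∀ j, Matrix (V j) (V (j + 1)) ℝ} {ε : ℕ → ℝ} {N : ℕ} {v0 : V 0}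

lemma eNorm_segProd_succ_mulVec_sub_le (hP : ∀ n w, 0 < prodUpTo V A n v0 w)
    (hε : ∀ n, 0 < ε n)
    (hbound : ∀ n w, ε n * √(Fintype.card (V (n + 1))) * (prodUpTo V A (n + 1) v0 w)⁻¹ *
      growthFactor A (n + 1) ≤ (1 / 4 : ℝ) ^ (n + 1))
    (hCD : ∀ n, N ≤ n → ∀ v w, |C n v w - D n v w| ≤ ε n * A n v w)
    {M : ℝ} (hM0 : 0 ≤ M)
    (hM : ∀ j n, j ≤ n → ∀ x,
      eNorm (segProd C j n *ᵥ x) ≤ M * (growthFactor A n / growthFactor A j) * eNorm x)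
    {χ : ∀ j, V j → ℝ} (hχ : χ ∈ limSet V D) {c : ℝ}
    (hsize : ∀ n, N ≤ n → ∀ w, prodUpTo V A n v0 w * χ n w ≤ c * 2 ^ n)
    {j n : ℕ} (hjn : j ≤ n) (hNn : N ≤ n) :
    eNorm (segProd C j (n + 1) *ᵥ χ (n + 1) - segProd C j n *ᵥ χ n) ≤
      c * (M / growthFactor A j) / 2 / 2 ^ n := by
  have hdiff : segProd C j (n + 1) *ᵥ χ (n + 1) - segProd C j n *ᵥ χ n =
      segProd C j n *ᵥ ((C n - D n) *ᵥ χ (n + 1)) := by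
    rw [segProd_succ C hjn, ← Matrix.mulVec_mulVec, Matrix.sub_mulVec, Matrix.mulVec_sub,
      ← hχ.2 n]
  have hgrowth : growthFactor A n * l2opNorm (A n) ≤ growthFactor A (n + 1) := by
    rw [growthFactor, growthFactor, prod_range_succ]
    gcongr
    · exact (growthFactor_pos A n).le
    · linarith [l2opNorm_nonneg (A n)]
  have hχnorm : ε n * growthFactor A (n + 1) * eNorm (χ (n + 1)) ≤
      (1 / 4 : ℝ) ^ (n + 1) * (c * 2 ^ (n + 1)) :=
    mul_eNorm_le_of_mul_le (hP (n + 1)) (mul_pos (hε n) (growthFactor_pos A _)).le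
      (fun w => by linarith [hbound n w]) (hχ.1 (n + 1))
      (hsize (n + 1) (by omega))
  rw [hdiff]
  calc eNorm (segProd C j n *ᵥ ((C n - D n) *ᵥ χ (n + 1)))
      ≤ M * (growthFactor A n / growthFactor A j) *
          (ε n * (l2opNorm (A n) * eNorm (χ (n + 1)))) :=
        (hM j n hjn _).trans (by
          have := growthFactor_pos A n; have := growthFactor_pos A j
          gcongr
          exact eNorm_mulVec_le_of_abs_le (hε n).le (hCD n hNn) _)
    _ = M / growthFactor A j *
          (ε n * (growthFactor A n * l2opNorm (A n)) * eNorm (χ (n + 1))) := by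
        ring
    _ ≤ M / growthFactor A j * (ε n * growthFactor A (n + 1) * eNorm (χ (n + 1))) := by
        have := growthFactor_pos A j; have := hε n; have := eNorm_nonneg (χ (n + 1))
        gcongr
    _ ≤ M / growthFactor A j * ((1 / 4 : ℝ) ^ (n + 1) * (c * 2 ^ (n + 1))) := by
        have := growthFactor_pos A j
        gcongr
    _ = c * (M / growthFactor A j) / 2 / 2 ^ n := by
        rw [show (1 / 4 : ℝ) ^ (n + 1) = (1 / 2) ^ (n + 1) * (1 / 2) ^ (n + 1) by
          rw [← mul_pow]; norm_num, div_pow, one_pow]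
        field_simp
        ring

lemma hasGeometricTail_limitMap (hP : ∀ n w, 0 < prodUpTo V A n v0 w)
    (hε : ∀ n, 0 < ε n)
    (hbound : ∀ n w, ε n * √(Fintype.card (V (n + 1))) * (prodUpTo V A (n + 1) v0 w)⁻¹ *
      growthFactor A (n + 1) ≤ (1 / 4 : ℝ) ^ (n + 1))
    (hCD : ∀ n, N ≤ n → ∀ v w, |C n v w - D n v w| ≤ ε n * A n v w)
    {M : ℝ} (hM0 : 0 ≤ M)
    (hM : ∀ j n, j ≤ n → ∀ x,
      eNorm (segProd C j n *ᵥ x) ≤ M * (growthFactor A n / growthFactor A j) * eNorm x)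
    {χ : ∀ j, V j → ℝ} (hχ : χ ∈ limSet V D) {c : ℝ} (hc : 0 ≤ c)
    (hsize : ∀ n, N ≤ n → ∀ w, prodUpTo V A n v0 w * χ n w ≤ c * 2 ^ n) :
    HasGeometricTail C χ N fun j => c * (M / growthFactor A j) := by
  intro j n hjn hNn
  obtain ⟨L, hL, htail⟩ :=
    exists_tendsto_of_eNorm_sub_le (F := fun n => segProd C j n *ᵥ χ n) (m := max j N)
      (by have := growthFactor_pos A j; positivity) fun n hn =>
        eNorm_segProd_succ_mulVec_sub_le hP hε hbound hCD hM0 hM hχ hsize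
          (le_of_max_le_left hn) (le_of_max_le_right hn)
  rw [limitMap, hL.limUnder_eq]
  exact htail n (max_le hjn hNn)

end Perturbation

section SizeBounds

variable {V : ℕ → Type} [∀ n, Fintype (V n)] [∀ n, DecidableEq (V n)]
  {A B : ∀ j, Matrix (V j) (V (j + 1)) ℝ}

lemma prodUpTo_mul_le_of_mem_limSet (hA : ∀ k v w, 0 ≤ A k v w) {ψ : ∀ j, V j → ℝ}
    (hψ : ψ ∈ limSet V A) (v0 : V 0) (n : ℕ) (w : V n) :
    prodUpTo V A n v0 w * ψ n w ≤ ψ 0 v0 * 2 ^ n := by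
  rw [prodUpTo_eq_segProd]
  exact (segProd_apply_mul_le_of_mem_limSet hA hψ n.zero_le v0 w).trans
    (le_mul_of_one_le_right (hψ.1 0 v0) (one_le_pow₀ one_le_two))

lemma prodUpTo_mul_le_of_mem_limSet_of_le_two_mul (hA : ∀ k v w, 0 ≤ A k v w)
    (hB : ∀ k v w, 0 ≤ B k v w) {N : ℕ}
    (hAB : ∀ k, N ≤ k → ∀ v w, A k v w ≤ 2 * B k v w) {φ : ∀ j, V j → ℝ}
    (hφ : φ ∈ limSet V B) (v0 : V 0) {n : ℕ} (hNn : N ≤ n) (w : V n) :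
    prodUpTo V A n v0 w * φ n w ≤ (prodUpTo V A N *ᵥ φ N) v0 * 2 ^ n := by
  rw [prodUpTo_eq_segProd, prodUpTo_eq_segProd, ← segProd_mul_segProd A N.zero_le hNn,
    Matrix.mul_apply, sum_mul, Matrix.mulVec, dotProduct, sum_mul]
  refine sum_le_sum fun v _ => ?_
  have hP := segProd_nonneg A hA 0 N v0 v
  calc segProd A 0 N v0 v * segProd A N n v w * φ n w
      ≤ segProd A 0 N v0 v * (2 ^ (n - N) * segProd B N n v w) * φ n w := by
        gcongr
        · exact hφ.1 n w
        · exact segProd_le_pow_mul A hA hAB hNn v w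
    _ = segProd A 0 N v0 v * 2 ^ (n - N) * (segProd B N n v w * φ n w) := by ring
    _ ≤ segProd A 0 N v0 v * 2 ^ n * φ N v :=
        mul_le_mul (mul_le_mul_of_nonneg_left (pow_le_pow_right₀ one_le_two (n.sub_le N)) hP)
          (segProd_apply_mul_le_of_mem_limSet hB hφ hNn v w)
          (mul_nonneg (segProd_nonneg B hB N n v w) (hφ.1 n w)) (by positivity)
    _ = segProd A 0 N v0 v * φ N v * 2 ^ n := by ring

lemma prodUpTo_pos (hA : ∀ k v w, 0 ≤ A k v w)
    (hApos : ∀ k (v0 : V 0) (w : V k), prodUpTo V A k v0 w ≠ 0) (v0 : V 0) (n : ℕ) (w : V n) :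
    0 < prodUpTo V A n v0 w :=
  (prodUpTo_eq_segProd A n ▸ segProd_nonneg A hA 0 n v0 w).lt_of_ne' (hApos n v0 w)

end SizeBounds

theorem stmt_3 (A B : ∀ j, Matrix (V j) (V (j + 1)) ℝ)
    (hA : ∀ j v w, 0 ≤ A j v w)
    (hApos : ∀ k (v0 : V 0) (w : V k), prodUpTo V A k v0 w ≠ 0)
    (hB : ∀ j v w, 0 ≤ B j v w)
    (ε : ℕ → ℝ) (hε : ∀ j, 0 < ε j ∧ ε j < 1 / 2)
    (hbound : ∀ (j : ℕ) (v0 : V 0) (w : V (j + 1)),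
      ε j * Real.sqrt (Fintype.card (V (j + 1))) * (prodUpTo V A (j + 1) v0 w)⁻¹ *
          ∏ k ∈ Finset.range (j + 1), (2 * l2opNorm (A k) + 1) ≤ (1 / 4 : ℝ) ^ (j + 1))
    (N : ℕ)
    (hpert : ∀ j, N ≤ j → ∀ v w, |A j v w - B j v w| ≤ ε j * A j v w) :
    ∃ Φ : ↥(limSet V A) ≃ₜ ↥(limSet V B),
      ∀ (x y : ∀ j, V j → ℝ) (hx : x ∈ limSet V A) (hy : y ∈ limSet V A) (t : ℝ),
        0 ≤ t → t ≤ 1 → ∀ hxy : t • x + (1 - t) • y ∈ limSet V A,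
          (Φ ⟨t • x + (1 - t) • y, hxy⟩ : ∀ j, V j → ℝ) =
            t • (Φ ⟨x, hx⟩ : ∀ j, V j → ℝ) + (1 - t) • (Φ ⟨y, hy⟩ : ∀ j, V j → ℝ) := by
  obtain ⟨v0⟩ : Nonempty (V 0) := inferInstance
  have hP := prodUpTo_pos hA hApos v0
  have hAB : ∀ k, N ≤ k → ∀ v w, A k v w ≤ 2 * B k v w := fun k hk v w =>
    le_two_mul_of_abs_sub_le (hA k v w) (hε k).2.le (hpert k hk v w)
  obtain ⟨MA, hMA0, hMA⟩ := exists_eNorm_segProd_mulVec_le A (C := A) (N := N) fun k _ x =>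
    (eNorm_mulVec_le _ x).trans (by nlinarith [eNorm_nonneg x, l2opNorm_nonneg (A k)])
  obtain ⟨MB, hMB0, hMB⟩ := exists_eNorm_segProd_mulVec_le A (C := B) (N := N) fun k hk =>
    eNorm_mulVec_le_of_abs_sub_le (hA k) ((hε k).2.le.trans (by norm_num)) (hpert k hk)
  have tailB : ∀ ψ ∈ limSet V A,
      HasGeometricTail B ψ N fun j => ψ 0 v0 * (MB / growthFactor A j) := fun ψ hψ =>
    hasGeometricTail_limitMap hP (fun n => (hε n).1) (hbound · v0)
      (fun n hn v w => abs_sub_comm (B n v w) _ ▸ hpert n hn v w) hMB0 hMB hψ (hψ.1 0 v0)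
      fun n _ => prodUpTo_mul_le_of_mem_limSet hA hψ v0 n
  have tailA : ∀ φ ∈ limSet V B,
      HasGeometricTail A φ N fun j => (prodUpTo V A N *ᵥ φ N) v0 * (MA / growthFactor A j) :=
    fun φ hφ => hasGeometricTail_limitMap hP (fun n => (hε n).1) (hbound · v0) hpert hMA0 hMA
      hφ (sum_nonneg fun v _ => mul_nonneg (hP N v).le (hφ.1 N v))
      fun n hn => prodUpTo_mul_le_of_mem_limSet_of_le_two_mul hA hB hAB hφ v0 hn
  obtain ⟨Φ, hΦ⟩ := exists_homeomorph_limSet (growthFactor_pos A) hB hA hMB0 hMA0 hMB hMA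
    (by fun_prop) (by fun_prop) tailB tailA
  refine ⟨Φ, fun x y hx hy t _ _ _ => ?_⟩
  simp only [hΦ]
  exact (tailB x hx).limitMap_smul_add_smul (tailB y hy) t (1 - t)
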